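/- arXiv:1604.06037 — 2 statements merged into one kernel-verified Lean document; each statement's English description precedes it below -/
import Mathlib

section
/- A pseudo equality algebra A is commutative if and only if for all x, y ∈ A with x ≤ y one has y = (x∼y)∽x and y = x∼(y∽x). -/
/-- A pseudo equality algebra (JK-algebra). -/
structure PEA (A : Type*) where
  meet : A → A → A
  sim : A → A → A      -- x ∼ y
  bsim : A → A → A     -- x ∽ y
  one : A
  meet_comm : ∀ x y, meet x y = meet y x
  meet_assoc : ∀ x y z, meet (meet x y) z = meet x (meet y z)
  meet_idem : ∀ x, meet x x = x
  meet_one : ∀ x, meet x one = x                      -- 1 is top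
  sim_self : ∀ x, sim x x = one                       -- (A2)
  bsim_self : ∀ x, bsim x x = one
  sim_one : ∀ x, sim x one = x                        -- (A3)
  one_bsim : ∀ x, bsim one x = x
  A4a : ∀ x y z, meet x y = x → meet y z = y → meet (sim x z) (sim y z) = sim x z
  A4b : ∀ x y z, meet x y = x → meet y z = y → meet (sim x z) (sim x y) = sim x z
  A4c : ∀ x y z, meet x y = x → meet y z = y → meet (bsim z x) (bsim z y) = bsim z x
  A4d : ∀ x y z, meet x y = x → meet y z = y → meet (bsim z x) (bsim y x) = bsim z x
  A5a : ∀ x y z, meet (sim x y) (sim (meet x z) (meet y z)) = sim x y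
  A5b : ∀ x y z, meet (bsim x y) (bsim (meet x z) (meet y z)) = bsim x y
  A6a : ∀ x y z, meet (sim x y) (bsim (sim z x) (sim z y)) = sim x y
  A6b : ∀ x y z, meet (bsim x y) (sim (bsim x z) (bsim y z)) = bsim x y
  A7a : ∀ x y z, meet (sim x y) (sim (sim x z) (sim y z)) = sim x y
  A7b : ∀ x y z, meet (bsim x y) (bsim (bsim z x) (bsim z y)) = bsim x y

namespace PEA

variable {A : Type*}

/-- The induced order: x ≤ y iff x ∧ y = x. -/
def le (P : PEA A) (x y : A) : Prop := P.meet x y = x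

/-- x ∨₁ y = (x∧y ∼ x) ∽ y. -/
def v1 (P : PEA A) (x y : A) : A := P.bsim (P.sim (P.meet x y) x) y

/-- x ∨₂ y = y ∼ (x ∽ x∧y). -/
def v2 (P : PEA A) (x y : A) : A := P.sim y (P.bsim x (P.meet x y))

/-- x → y = x∧y ∼ x. -/
def arrow (P : PEA A) (x y : A) : A := P.sim (P.meet x y) x

/-- x ⇝ y = x ∽ x∧y. -/
def squig (P : PEA A) (x y : A) : A := P.bsim x (P.meet x y)

/-- Invariance: x∧y ∼ y = x ∼ y and x ∽ x∧y = x ∽ y. -/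
def Invariant (P : PEA A) : Prop :=
  ∀ x y, P.sim (P.meet x y) y = P.sim x y ∧ P.bsim x (P.meet x y) = P.bsim x y

/-- Commutativity: (x∧y∼x)∽y = (x∧y∼y)∽x and y∼(x∽x∧y) = x∼(y∽x∧y). -/
def Commutative (P : PEA A) : Prop :=
  ∀ x y, P.bsim (P.sim (P.meet x y) x) y = P.bsim (P.sim (P.meet x y) y) x ∧
    P.sim y (P.bsim x (P.meet x y)) = P.sim x (P.bsim y (P.meet x y))

/-- D is an upset. -/
def IsUpset (P : PEA A) (D : Set A) : Prop := ∀ x y, x ∈ D → P.le x y → y ∈ D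

/-- Deductive system. -/
def IsDS (P : PEA A) (D : Set A) : Prop :=
  P.one ∈ D ∧ P.IsUpset D ∧ ∀ x y, x ∈ D → P.sim y x ∈ D → y ∈ D

/-- Commutative deductive system. -/
def IsCommDS (P : PEA A) (D : Set A) : Prop :=
  P.IsDS D ∧
  (∀ x y, P.sim (P.meet x y) y ∈ D → P.sim x (P.bsim (P.sim (P.meet x y) x) y) ∈ D) ∧
  (∀ x y, P.bsim y (P.meet x y) ∈ D → P.bsim (P.sim y (P.bsim x (P.meet x y))) x ∈ D)

/-- Normal deductive system. -/
def IsNormalDS (P : PEA A) (D : Set A) : Prop :=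
  P.IsDS D ∧ ∀ x y, (P.sim x y ∈ D ∧ P.sim y x ∈ D) ↔ (P.bsim y x ∈ D ∧ P.bsim x y ∈ D)

/-- Measure: m(y∼x) = m(x∽y) = m(y) − m(x) whenever y ≤ x, with values in [0,∞). -/
def IsMeasure (P : PEA A) (m : A → ℝ) : Prop :=
  (∀ x, 0 ≤ m x) ∧
  ∀ x y, P.le y x → m (P.sim y x) = m y - m x ∧ m (P.bsim x y) = m y - m x

end PEA

namespace PEA

variable {A' : Type*} (P : PEA A')

lemma my_le_refl (x : A') : P.le x x := P.meet_idem x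

lemma my_le_trans {x y z : A'} (h1 : P.le x y) (h2 : P.le y z) : P.le x z := by
  unfold PEA.le at *
  calc P.meet x z = P.meet (P.meet x y) z := by rw [h1]
    _ = P.meet x (P.meet y z) := P.meet_assoc x y z
    _ = P.meet x y := by rw [h2]
    _ = x := h1

lemma my_le_antisymm {x y : A'} (h1 : P.le x y) (h2 : P.le y x) : x = y := by
  unfold PEA.le at *
  calc x = P.meet x y := h1.symm
    _ = P.meet y x := P.meet_comm x y
    _ = y := h2

lemma one_meet (x : A') : P.meet P.one x = x := by
  rw [P.meet_comm, P.meet_one]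

lemma my_le_one (x : A') : P.le x P.one := P.meet_one x

/-- If u ≤ v then u ≤ u∼v. -/
lemma le_sim {u v : A'} (h : P.le u v) : P.le u (P.sim u v) := by
  have := P.A4b u v P.one h (P.meet_one v)
  rwa [P.sim_one] at this

/-- If u ≤ v then u ≤ v∽u. -/
lemma le_bsim {u v : A'} (h : P.le u v) : P.le u (P.bsim v u) := by
  have := P.A4d u v P.one h (P.meet_one v)
  rwa [P.one_bsim] at this

/-- y ≤ (y∧z) ∼ z. -/
lemma le_sim_meet (y z : A') : P.le y (P.sim (P.meet y z) z) := by
  have := P.A5a y P.one z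
  rwa [P.sim_one, P.one_meet] at this

lemma meet_le_left (x y : A') : P.le (P.meet x y) x := by
  unfold PEA.le
  calc P.meet (P.meet x y) x = P.meet (P.meet y x) x := by rw [P.meet_comm x y]
    _ = P.meet y (P.meet x x) := P.meet_assoc y x x
    _ = P.meet y x := by rw [P.meet_idem]
    _ = P.meet x y := P.meet_comm y x

lemma meet_le_right (x y : A') : P.le (P.meet x y) y := by
  rw [P.meet_comm]; exact P.meet_le_left y x

end PEA

theorem stmt6 {A : Type*} (P : PEA A) :
    P.Commutative ↔
      ∀ x y, P.le x y → y = P.bsim (P.sim x y) x ∧ y = P.sim x (P.bsim y x) := by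
  constructor
  · intro hc x y hxy
    obtain ⟨e1, e2⟩ := hc x y
    have hm : P.meet x y = x := hxy
    rw [hm, P.sim_self, P.one_bsim] at e1
    rw [hm, P.bsim_self, P.sim_one] at e2
    exact ⟨e1, e2⟩
  · intro h x y
    set a := P.meet x y with ha
    have hax : P.le a x := P.meet_le_left x y
    have hay : P.le a y := P.meet_le_right x y
    obtain ⟨hx1, hx2⟩ := h a x hax
    obtain ⟨hy1, hy2⟩ := h a y hay
    set t := P.sim a x with ht
    set s := P.sim a y with hs
    have hyt : P.le y t := by
      have h0 := P.le_sim_meet y x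
      rw [P.meet_comm y x, ← ha, ← ht] at h0
      exact h0
    have hxs : P.le x s := by
      have h0 := P.le_sim_meet x y
      rw [← ha, ← hs] at h0
      exact h0
    set G1 := P.bsim t y with hG1
    set G2 := P.bsim s x with hG2
    have hxG1 : P.le x G1 := by
      have h0 := P.A4c a y t hay hyt
      rw [← hx1, ← hG1] at h0
      exact h0
    have hyG1 : P.le y G1 := P.le_bsim hyt
    have hxG2 : P.le x G2 := P.le_bsim hxs
    have hyG2 : P.le y G2 := by
      have h0 := P.A4c a x s hax hxs
      rw [← hy1, ← hG2] at h0
      exact h0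
    have lub1 : ∀ z, P.le x z → P.le y z → P.le G1 z := by
      intro z hxz hyz
      have hz := (h y z hyz).1
      have hzx : P.meet z x = x := by rw [P.meet_comm]; exact hxz
      have key : P.le (P.sim y z) t := by
        have h0 := P.A5a y z x
        rw [P.meet_comm y x, ← ha, hzx, ← ht] at h0
        exact h0
      have h0 := P.A4d y (P.sim y z) t (P.le_sim hyz) key
      rw [← hz, ← hG1] at h0
      exact h0
    have lub2 : ∀ z, P.le x z → P.le y z → P.le G2 z := by
      intro z hxz hyz
      have hz := (h x z hxz).1
      have hzy : P.meet z y = y := by rw [P.meet_comm]; exact hyz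
      have key : P.le (P.sim x z) s := by
        have h0 := P.A5a x z y
        rw [← ha, hzy, ← hs] at h0
        exact h0
      have h0 := P.A4d x (P.sim x z) s (P.le_sim hxz) key
      rw [← hz, ← hG2] at h0
      exact h0
    have hG : G1 = G2 :=
      P.my_le_antisymm (lub1 G2 hxG2 hyG2) (lub2 G1 hxG1 hyG1)
    refine ⟨hG, ?_⟩
    set p := P.bsim x a with hp
    set q := P.bsim y a with hq
    have h1 : P.le (P.sim x q) G1 := by
      have h0 := P.A6a x q a
      rw [← hy2, ← ht, ← hG1] at h0
      exact h0
    have h2 : P.le G1 (P.sim x q) := by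
      have h0 := P.A6b t y a
      rw [← hx1, ← hq, ← hG1] at h0
      exact h0
    have h3 : P.le (P.sim y p) G2 := by
      have h0 := P.A6a y p a
      rw [← hx2, ← hs, ← hG2] at h0
      exact h0
    have h4 : P.le G2 (P.sim y p) := by
      have h0 := P.A6b s x a
      rw [← hy1, ← hp, ← hG2] at h0
      exact h0
    calc P.sim y p = G2 := P.my_le_antisymm h3 h4
      _ = G1 := hG.symm
      _ = P.sim x q := P.my_le_antisymm h2 h1
end

section
/- If A is a commutative pseudo equality algebra, then the poset (A, ≤) is a lattice, with join x ∨ y = (x∧y∼x)∽y = y∼(x∽x∧y), and this lattice is distributive. -/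
namespace PEA

variable {A : Type*} (P : PEA A)

theorem pea_le_refl (x : A) : P.le x x := P.meet_idem x

theorem pea_le_trans {x y z : A} (h1 : P.le x y) (h2 : P.le y z) : P.le x z := by
  unfold le at *
  calc P.meet x z = P.meet (P.meet x y) z := by rw [h1]
    _ = P.meet x (P.meet y z) := P.meet_assoc ..
    _ = P.meet x y := by rw [h2]
    _ = x := h1

theorem pea_le_antisymm {x y : A} (h1 : P.le x y) (h2 : P.le y x) : x = y := by
  unfold le at *
  rw [← h1, P.meet_comm, h2]

theorem pea_meet_le_left (x y : A) : P.le (P.meet x y) x := by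
  unfold le
  calc P.meet (P.meet x y) x = P.meet x (P.meet x y) := P.meet_comm ..
    _ = P.meet (P.meet x x) y := (P.meet_assoc ..).symm
    _ = P.meet x y := by rw [P.meet_idem]

theorem pea_meet_le_right (x y : A) : P.le (P.meet x y) y := by
  unfold le
  calc P.meet (P.meet x y) y = P.meet x (P.meet y y) := P.meet_assoc ..
    _ = P.meet x y := by rw [P.meet_idem]

theorem pea_le_meet {x y z : A} (h1 : P.le z x) (h2 : P.le z y) : P.le z (P.meet x y) := by
  unfold le at *
  calc P.meet z (P.meet x y) = P.meet (P.meet z x) y := (P.meet_assoc ..).symm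
    _ = P.meet z y := by rw [h1]
    _ = z := h2

theorem pea_one_meet (x : A) : P.meet P.one x = x := by
  rw [P.meet_comm, P.meet_one]

theorem pea_eq_one {x : A} (h : P.le P.one x) : x = P.one := by
  unfold le at h
  rw [← P.meet_one x, P.meet_comm, h]

theorem pea_meet_eq_of_le {x y : A} (h : P.le x y) : P.meet y x = x := by
  rw [P.meet_comm]; exact h

theorem pea_meet_rotate (x y z : A) : P.meet (P.meet x y) z = P.meet y (P.meet x z) := by
  rw [P.meet_comm x y, P.meet_assoc]

theorem pea_le_arrow (z x : A) : P.le x (P.arrow z x) := by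
  have h := P.A5a x P.one z
  rw [P.sim_one, pea_one_meet] at h
  show P.meet x (P.sim (P.meet z x) z) = x
  rw [P.meet_comm z x]
  exact h

theorem pea_le_squig (z x : A) : P.le x (P.squig z x) := by
  have h := P.A5b P.one x z
  rw [P.one_bsim, pea_one_meet] at h
  show P.meet x (P.bsim z (P.meet z x)) = x
  rw [P.meet_comm z x]
  exact h

theorem pea_arrow_of_le {x y : A} (h : P.le x y) : P.arrow x y = P.one := by
  show P.sim (P.meet x y) x = P.one
  rw [h, P.sim_self]

theorem pea_squig_of_le {x y : A} (h : P.le x y) : P.squig x y = P.one := by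
  show P.bsim x (P.meet x y) = P.one
  rw [h, P.bsim_self]

theorem pea_squig_eq {v w : A} (h : P.le w v) : P.squig v w = P.bsim v w := by
  show P.bsim v (P.meet v w) = P.bsim v w
  rw [pea_meet_eq_of_le P h]

theorem pea_arrow_antitone {u v : A} (t : A) (h : P.le u v) :
    P.le (P.arrow v t) (P.arrow u t) := by
  have h5 := P.A5a (P.meet v t) v u
  have huv : P.meet v u = u := pea_meet_eq_of_le P h
  have e : P.meet (P.meet v t) u = P.meet u t := by
    calc P.meet (P.meet v t) u = P.meet v (P.meet t u) := P.meet_assoc ..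
      _ = P.meet v (P.meet u t) := by rw [P.meet_comm t u]
      _ = P.meet (P.meet v u) t := (P.meet_assoc ..).symm
      _ = P.meet u t := by rw [huv]
  rw [huv, e] at h5
  exact h5

theorem pea_squig_antitone {u v : A} (t : A) (h : P.le u v) :
    P.le (P.squig v t) (P.squig u t) := by
  have h5 := P.A5b v (P.meet v t) u
  have huv : P.meet v u = u := pea_meet_eq_of_le P h
  have e : P.meet (P.meet v t) u = P.meet u t := by
    calc P.meet (P.meet v t) u = P.meet v (P.meet t u) := P.meet_assoc ..
      _ = P.meet v (P.meet u t) := by rw [P.meet_comm t u]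
      _ = P.meet (P.meet v u) t := (P.meet_assoc ..).symm
      _ = P.meet u t := by rw [huv]
  rw [huv, e] at h5
  exact h5

theorem pea_meet_mono_right {t t' : A} (z : A) (h : P.le t t') :
    P.le (P.meet z t) (P.meet z t') :=
  pea_le_meet P (pea_meet_le_left P z t) (pea_le_trans P (pea_meet_le_right P z t) h)

theorem pea_arrow_mono {t t' : A} (z : A) (h : P.le t t') :
    P.le (P.arrow z t) (P.arrow z t') :=
  P.A4a (P.meet z t) (P.meet z t') z (pea_meet_mono_right P z h) (pea_meet_le_left P z t')

theorem pea_squig_mono {t t' : A} (z : A) (h : P.le t t') :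
    P.le (P.squig z t) (P.squig z t') :=
  P.A4c (P.meet z t) (P.meet z t') z (pea_meet_mono_right P z h) (pea_meet_le_left P z t')

theorem pea_I1 (hc : P.Commutative) {c z : A} (h : P.le c z) :
    P.bsim (P.sim c z) c = z := by
  have h1 := (hc c z).1
  unfold le at h
  rw [h, P.sim_self, P.one_bsim] at h1
  exact h1.symm

theorem pea_I2 (hc : P.Commutative) {c z : A} (h : P.le c z) :
    P.sim c (P.bsim z c) = z := by
  have h1 := (hc z c).2
  have hzc : P.meet z c = c := pea_meet_eq_of_le P h
  rw [hzc, P.bsim_self, P.sim_one] at h1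
  exact h1

theorem pea_le_of_arrow (hc : P.Commutative) {x y : A} (h : P.arrow x y = P.one) :
    P.le x y := by
  have h1 := pea_I1 P hc (pea_meet_le_left P x y)
  have h' : P.sim (P.meet x y) x = P.one := h
  rw [h', P.one_bsim] at h1
  show P.meet x y = x
  exact h1

theorem pea_le_of_squig (hc : P.Commutative) {x y : A} (h : P.squig x y = P.one) :
    P.le x y := by
  have h1 := pea_I2 P hc (pea_meet_le_left P x y)
  have h' : P.bsim x (P.meet x y) = P.one := h
  rw [h', P.sim_one] at h1
  show P.meet x y = x
  exact h1

theorem pea_le_bsim_arrow (d c : A) : P.le c (P.bsim (P.arrow d c) c) := by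
  have h1 : P.le c (P.arrow d c) := pea_le_arrow P d c
  have h3 := pea_le_squig P (P.arrow d c) c
  rw [pea_squig_eq P h1] at h3
  exact h3

theorem pea_le_v1_right (x y : A) : P.le y (P.v1 x y) :=
  pea_le_bsim_arrow P x y

theorem pea_le_v1_left (hc : P.Commutative) (x y : A) : P.le x (P.v1 x y) := by
  have e : P.v1 x y = P.bsim (P.arrow y x) x := by
    have e1 : P.v1 x y = P.bsim (P.sim (P.meet x y) y) x := (hc x y).1
    rw [e1]
    show P.bsim (P.sim (P.meet x y) y) x = P.bsim (P.sim (P.meet y x) y) x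
    rw [P.meet_comm x y]
  rw [e]
  exact pea_le_bsim_arrow P y x

theorem pea_arrow_flip {x z : A} (h : P.le x z) : P.arrow z x = P.sim x z := by
  show P.sim (P.meet z x) z = P.sim x z
  rw [pea_meet_eq_of_le P h]

theorem pea_v1_min (hc : P.Commutative) {x y z : A} (hx : P.le x z) (hy : P.le y z) :
    P.le (P.v1 x y) z := by
  have e : P.v1 x y = P.bsim (P.arrow y x) x := by
    have e1 : P.v1 x y = P.bsim (P.sim (P.meet x y) y) x := (hc x y).1
    rw [e1]
    show P.bsim (P.sim (P.meet x y) y) x = P.bsim (P.sim (P.meet y x) y) x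
    rw [P.meet_comm x y]
  have h1 : P.le (P.arrow z x) (P.arrow y x) := pea_arrow_antitone P x hy
  have h2 := P.A4d x (P.arrow z x) (P.arrow y x) (pea_le_arrow P z x) h1
  have h3 : P.bsim (P.arrow z x) x = z := by
    rw [pea_arrow_flip P hx]
    exact pea_I1 P hc hx
  rw [e, ← h3]
  exact h2

theorem pea_le_sim_squig (d c : A) : P.le c (P.sim c (P.squig d c)) := by
  have hB : P.le c (P.squig d c) := pea_le_squig P d c
  have h1 := pea_le_arrow P (P.squig d c) c
  rw [pea_arrow_flip P hB] at h1
  exact h1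

theorem pea_le_v2_right (x y : A) : P.le y (P.v2 x y) :=
  pea_le_sim_squig P x y

theorem pea_le_v2_left (hc : P.Commutative) (x y : A) : P.le x (P.v2 x y) := by
  have e : P.v2 x y = P.sim x (P.squig y x) := by
    have e1 : P.v2 x y = P.sim x (P.bsim y (P.meet x y)) := (hc x y).2
    rw [e1]
    show P.sim x (P.bsim y (P.meet x y)) = P.sim x (P.bsim y (P.meet y x))
    rw [P.meet_comm x y]
  rw [e]
  exact pea_le_sim_squig P y x

theorem pea_v2_min (hc : P.Commutative) {x y z : A} (hx : P.le x z) (hy : P.le y z) :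
    P.le (P.v2 x y) z := by
  have e : P.v2 x y = P.sim x (P.squig y x) := by
    have e1 : P.v2 x y = P.sim x (P.bsim y (P.meet x y)) := (hc x y).2
    rw [e1]
    show P.sim x (P.bsim y (P.meet x y)) = P.sim x (P.bsim y (P.meet y x))
    rw [P.meet_comm x y]
  have h1 : P.le (P.squig z x) (P.squig y x) := pea_squig_antitone P x hy
  have h2 := P.A4b x (P.squig z x) (P.squig y x) (pea_le_squig P z x) h1
  have h3 : P.sim x (P.squig z x) = z := by
    rw [pea_squig_eq P hx]
    exact pea_I2 P hc hx
  rw [e, ← h3]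
  exact h2

theorem pea_v1_eq_v2 (hc : P.Commutative) (x y : A) : P.v1 x y = P.v2 x y :=
  pea_le_antisymm P
    (pea_v1_min P hc (pea_le_v2_left P hc x y) (pea_le_v2_right P x y))
    (pea_v2_min P hc (pea_le_v1_left P hc x y) (pea_le_v1_right P x y))

theorem pea_v1_comm (hc : P.Commutative) (x y : A) : P.v1 x y = P.v1 y x :=
  pea_le_antisymm P
    (pea_v1_min P hc (pea_le_v1_right P y x) (pea_le_v1_left P hc y x))
    (pea_v1_min P hc (pea_le_v1_right P x y) (pea_le_v1_left P hc x y))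

theorem pea_A1 (z v y : A) :
    P.le (P.arrow z v) (P.squig (P.arrow v y) (P.arrow z y)) := by
  have h6 := P.A6a (P.meet z v) z (P.meet (P.meet z v) y)
  -- h6 : le (arrow z v) (bsim A1 B1), A1 = sim c0 (meet z v), B1 = sim c0 z
  have eB : P.sim (P.meet (P.meet z v) y) z = P.arrow z (P.meet v y) := by
    show P.sim (P.meet (P.meet z v) y) z = P.sim (P.meet z (P.meet v y)) z
    rw [P.meet_assoc]
  have hBA : P.le (P.sim (P.meet (P.meet z v) y) z)
      (P.sim (P.meet (P.meet z v) y) (P.meet z v)) :=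
    P.A4b (P.meet (P.meet z v) y) (P.meet z v) z
      (pea_meet_le_left P (P.meet z v) y) (pea_meet_le_left P z v)
  have hBB0 : P.le (P.sim (P.meet (P.meet z v) y) z) (P.arrow z y) := by
    rw [eB]
    exact pea_arrow_mono P z (pea_meet_le_right P v y)
  have hBm : P.le (P.sim (P.meet (P.meet z v) y) z)
      (P.meet (P.sim (P.meet (P.meet z v) y) (P.meet z v)) (P.arrow z y)) :=
    pea_le_meet P hBA hBB0
  have h4c := P.A4c (P.sim (P.meet (P.meet z v) y) z)
      (P.meet (P.sim (P.meet (P.meet z v) y) (P.meet z v)) (P.arrow z y))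
      (P.sim (P.meet (P.meet z v) y) (P.meet z v)) hBm
      (pea_meet_le_left P (P.sim (P.meet (P.meet z v) y) (P.meet z v)) (P.arrow z y))
  -- h4c : le (bsim A1 B1) (squig A1 (arrow z y))
  have hA : P.le (P.arrow v y) (P.sim (P.meet (P.meet z v) y) (P.meet z v)) :=
    pea_arrow_antitone P y (pea_meet_le_right P z v)
  have hsq : P.le (P.squig (P.sim (P.meet (P.meet z v) y) (P.meet z v)) (P.arrow z y))
      (P.squig (P.arrow v y) (P.arrow z y)) :=
    pea_squig_antitone P (P.arrow z y) hA
  exact pea_le_trans P (pea_le_trans P h6 h4c) hsq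

theorem pea_A2 (z v y : A) :
    P.le (P.squig z v) (P.arrow (P.squig v y) (P.squig z y)) := by
  have h6 := P.A6b z (P.meet z v) (P.meet (P.meet z v) y)
  -- h6 : le (squig z v) (sim B1 A1), B1 = bsim z c0, A1 = bsim (meet z v) c0
  have eB : P.bsim z (P.meet (P.meet z v) y) = P.squig z (P.meet v y) := by
    show P.bsim z (P.meet (P.meet z v) y) = P.bsim z (P.meet z (P.meet v y))
    rw [P.meet_assoc]
  have hBA : P.le (P.bsim z (P.meet (P.meet z v) y))
      (P.bsim (P.meet z v) (P.meet (P.meet z v) y)) :=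
    P.A4d (P.meet (P.meet z v) y) (P.meet z v) z
      (pea_meet_le_left P (P.meet z v) y) (pea_meet_le_left P z v)
  have hBB0 : P.le (P.bsim z (P.meet (P.meet z v) y)) (P.squig z y) := by
    rw [eB]
    exact pea_squig_mono P z (pea_meet_le_right P v y)
  have hBm : P.le (P.bsim z (P.meet (P.meet z v) y))
      (P.meet (P.bsim (P.meet z v) (P.meet (P.meet z v) y)) (P.squig z y)) :=
    pea_le_meet P hBA hBB0
  have h4a := P.A4a (P.bsim z (P.meet (P.meet z v) y))
      (P.meet (P.bsim (P.meet z v) (P.meet (P.meet z v) y)) (P.squig z y))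
      (P.bsim (P.meet z v) (P.meet (P.meet z v) y)) hBm
      (pea_meet_le_left P (P.bsim (P.meet z v) (P.meet (P.meet z v) y)) (P.squig z y))
  -- h4a : le (sim B1 A1) (arrow A1 (squig z y))
  have hA : P.le (P.squig v y) (P.bsim (P.meet z v) (P.meet (P.meet z v) y)) :=
    pea_squig_antitone P y (pea_meet_le_right P z v)
  have harr : P.le (P.arrow (P.bsim (P.meet z v) (P.meet (P.meet z v) y)) (P.squig z y))
      (P.arrow (P.squig v y) (P.squig z y)) :=
    pea_arrow_antitone P (P.squig z y) hA
  exact pea_le_trans P (pea_le_trans P h6 h4a) harr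

theorem pea_Exle (hc : P.Commutative) (z v w : A) :
    P.le (P.arrow z (P.squig v w)) (P.squig v (P.arrow z w)) := by
  have h1 := pea_A1 P z (P.squig v w) w
  have e : P.arrow (P.squig v w) w = P.v2 v w := by
    rw [pea_arrow_flip P (pea_le_squig P v w)]
    rfl
  rw [e] at h1
  have h2 : P.le (P.squig (P.v2 v w) (P.arrow z w)) (P.squig v (P.arrow z w)) :=
    pea_squig_antitone P (P.arrow z w) (pea_le_v2_left P hc v w)
  exact pea_le_trans P h1 h2

theorem pea_Exge (hc : P.Commutative) (z v w : A) :
    P.le (P.squig z (P.arrow v w)) (P.arrow v (P.squig z w)) := by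
  have h1 := pea_A2 P z (P.arrow v w) w
  have e : P.squig (P.arrow v w) w = P.v1 v w := by
    rw [pea_squig_eq P (pea_le_arrow P v w)]
    rfl
  rw [e] at h1
  have h2 : P.le (P.arrow (P.v1 v w) (P.squig z w)) (P.arrow v (P.squig z w)) :=
    pea_arrow_antitone P (P.squig z w) (pea_le_v1_left P hc v w)
  exact pea_le_trans P h1 h2

theorem pea_Ex (hc : P.Commutative) (z v w : A) :
    P.arrow z (P.squig v w) = P.squig v (P.arrow z w) :=
  pea_le_antisymm P (pea_Exle P hc z v w) (pea_Exge P hc v z w)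

theorem pea_magic (hc : P.Commutative) {c x y : A} (hcx : P.le c x) (hcy : P.le c y) :
    P.le (P.sim c (P.meet x y)) (P.v1 (P.sim c x) (P.sim c y)) := by
  have hcfx : P.le c (P.sim c x) := by
    have h := pea_le_arrow P x c
    rw [pea_arrow_flip P hcx] at h
    exact h
  have hfxS : P.le (P.sim c x) (P.v1 (P.sim c x) (P.sim c y)) :=
    pea_le_v1_left P hc (P.sim c x) (P.sim c y)
  have hfyS : P.le (P.sim c y) (P.v1 (P.sim c x) (P.sim c y)) :=
    pea_le_v1_right P (P.sim c x) (P.sim c y)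
  have hcS : P.le c (P.v1 (P.sim c x) (P.sim c y)) := pea_le_trans P hcfx hfxS
  have hgx : P.le (P.bsim (P.v1 (P.sim c x) (P.sim c y)) c) x := by
    have h := P.A4d c (P.sim c x) (P.v1 (P.sim c x) (P.sim c y)) hcfx hfxS
    rw [pea_I1 P hc hcx] at h
    exact h
  have hgy : P.le (P.bsim (P.v1 (P.sim c x) (P.sim c y)) c) y := by
    have hcfy : P.le c (P.sim c y) := by
      have h := pea_le_arrow P y c
      rw [pea_arrow_flip P hcy] at h
      exact h
    have h := P.A4d c (P.sim c y) (P.v1 (P.sim c x) (P.sim c y)) hcfy hfyS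
    rw [pea_I1 P hc hcy] at h
    exact h
  have hg : P.le (P.bsim (P.v1 (P.sim c x) (P.sim c y)) c) (P.meet x y) :=
    pea_le_meet P hgx hgy
  have hcg : P.le c (P.bsim (P.v1 (P.sim c x) (P.sim c y)) c) := by
    have h := pea_le_squig P (P.v1 (P.sim c x) (P.sim c y)) c
    rw [pea_squig_eq P hcS] at h
    exact h
  have h4b := P.A4b c (P.bsim (P.v1 (P.sim c x) (P.sim c y)) c) (P.meet x y) hcg hg
  rw [pea_I2 P hc hcS] at h4b
  exact h4b

theorem pea_WDist (hc : P.Commutative) {x y z : A} (h : P.le x (P.v1 y z)) :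
    P.le x (P.v1 (P.meet x y) z) := by
  -- step 1: arrow y z ≤ arrow x z
  have exv : P.squig (P.arrow y z) z = P.v1 y z := by
    rw [pea_squig_eq P (pea_le_arrow P y z)]
    rfl
  have h1 : P.arrow x (P.squig (P.arrow y z) z) = P.one := by
    apply pea_arrow_of_le
    rw [exv]; exact h
  have hEx := pea_Ex P hc x (P.arrow y z) z
  rw [h1] at hEx
  have hs : P.le (P.arrow y z) (P.arrow x z) := pea_le_of_squig P hc hEx.symm
  -- step 2: arrow (meet x y) z ≤ arrow x z
  have hcx : P.le (P.meet (P.meet x y) z) x :=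
    pea_le_trans P (pea_meet_le_left P (P.meet x y) z) (pea_meet_le_left P x y)
  have hcy : P.le (P.meet (P.meet x y) z) y :=
    pea_le_trans P (pea_meet_le_left P (P.meet x y) z) (pea_meet_le_right P x y)
  have hm := pea_magic P hc hcx hcy
  have ecx : P.sim (P.meet (P.meet x y) z) x = P.arrow x (P.meet y z) := by
    show P.sim (P.meet (P.meet x y) z) x = P.sim (P.meet x (P.meet y z)) x
    rw [P.meet_assoc]
  have ecy : P.sim (P.meet (P.meet x y) z) y = P.arrow y (P.meet x z) := by
    show P.sim (P.meet (P.meet x y) z) y = P.sim (P.meet y (P.meet x z)) y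
    rw [pea_meet_rotate]
  have f1 : P.le (P.sim (P.meet (P.meet x y) z) x) (P.arrow x z) := by
    rw [ecx]
    exact pea_arrow_mono P x (pea_meet_le_right P y z)
  have f2 : P.le (P.sim (P.meet (P.meet x y) z) y) (P.arrow x z) := by
    rw [ecy]
    exact pea_le_trans P (pea_arrow_mono P y (pea_meet_le_right P x z)) hs
  have hSq : P.le (P.v1 (P.sim (P.meet (P.meet x y) z) x)
      (P.sim (P.meet (P.meet x y) z) y)) (P.arrow x z) := pea_v1_min P hc f1 f2
  have hVq : P.le (P.arrow (P.meet x y) z) (P.arrow x z) := pea_le_trans P hm hSq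
  -- step 3: conclude
  have exv2 : P.squig (P.arrow (P.meet x y) z) z = P.v1 (P.meet x y) z := by
    rw [pea_squig_eq P (pea_le_arrow P (P.meet x y) z)]
    rfl
  apply pea_le_of_arrow P hc
  rw [← exv2, pea_Ex P hc x (P.arrow (P.meet x y) z) z]
  exact pea_squig_of_le P hVq

end PEA

theorem stmt8 {A : Type*} (P : PEA A) (hc : P.Commutative) :
    (∀ x y, P.v1 x y = P.v2 x y) ∧
    (∀ x y, P.le x (P.v1 x y) ∧ P.le y (P.v1 x y) ∧
      ∀ z, P.le x z → P.le y z → P.le (P.v1 x y) z) ∧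
    (∀ x y z, P.meet x (P.v1 y z) = P.v1 (P.meet x y) (P.meet x z)) := by
  refine ⟨fun x y => PEA.pea_v1_eq_v2 P hc x y,
    fun x y => ⟨PEA.pea_le_v1_left P hc x y, PEA.pea_le_v1_right P x y,
      fun z hx hy => PEA.pea_v1_min P hc hx hy⟩, ?_⟩
  intro x y z
  have hyJ : P.le y (P.v1 y z) := PEA.pea_le_v1_left P hc y z
  have hzJ : P.le z (P.v1 y z) := PEA.pea_le_v1_right P y z
  have ewy : P.meet (P.meet x (P.v1 y z)) y = P.meet x y := by
    rw [P.meet_assoc, P.meet_comm (P.v1 y z) y, hyJ]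
  have ewz : P.meet (P.meet x (P.v1 y z)) z = P.meet x z := by
    rw [P.meet_assoc, P.meet_comm (P.v1 y z) z, hzJ]
  have h1 : P.le (P.meet x (P.v1 y z)) (P.v1 (P.meet (P.meet x (P.v1 y z)) y) z) :=
    PEA.pea_WDist P hc (PEA.pea_meet_le_right P x (P.v1 y z))
  rw [ewy, PEA.pea_v1_comm P hc (P.meet x y) z] at h1
  have h2 : P.le (P.meet x (P.v1 y z))
      (P.v1 (P.meet (P.meet x (P.v1 y z)) z) (P.meet x y)) :=
    PEA.pea_WDist P hc h1
  rw [ewz, PEA.pea_v1_comm P hc (P.meet x z) (P.meet x y)] at h2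
  have h3 : P.le (P.v1 (P.meet x y) (P.meet x z)) (P.meet x (P.v1 y z)) :=
    PEA.pea_v1_min P hc
      (PEA.pea_le_meet P (PEA.pea_meet_le_left P x y)
        (PEA.pea_le_trans P (PEA.pea_meet_le_right P x y) hyJ))
      (PEA.pea_le_meet P (PEA.pea_meet_le_left P x z)
        (PEA.pea_le_trans P (PEA.pea_meet_le_right P x z) hzJ))
  exact PEA.pea_le_antisymm P h2 h3
end
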